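/- arXiv:2202.10831 — 2 statements merged into one kernel-verified Lean document; each statement's English description precedes it below -/
import Mathlib

section
/- Let S be a finite planar point set in general position, u, v ∈ S two extreme points of S that are not consecutive along the boundary of the convex hull. Then no plane straight-line spanning path on S has uv as its first edge. -/
open scoped Classical

noncomputable section

abbrev Pt : Type := ℝ × ℝ

/-- default point -/
def pd : Pt := (0, 0)

/-- No three distinct points of `S` are collinear. -/
def GenPos (S : Finset Pt) : Prop :=
  ∀ p ∈ S, ∀ q ∈ S, ∀ r ∈ S, p ≠ q → p ≠ r → q ≠ r →
    ¬ Collinear ℝ ({p, q, r} : Set Pt)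

/-- The (ordered) edges of a path given as a list of vertices. -/
def pathEdges (l : List Pt) : List (Pt × Pt) := l.zip l.tail

/-- The (ordered) edges of a cycle given as a list of vertices. -/
def cycleEdges (l : List Pt) : List (Pt × Pt) := l.zip (l.rotate 1)

/-- A family of straight-line segments is pairwise non-crossing:
the open segments of any two distinct members are disjoint. -/
def NonCrossing (E : List (Pt × Pt)) : Prop :=
  E.Pairwise fun e f => openSegment ℝ e.1 e.2 ∩ openSegment ℝ f.1 f.2 = ∅

/-- `l` is a plane (crossing-free) straight-line spanning path of `S`. -/
def IsPlanePath (S : Finset Pt) (l : List Pt) : Prop :=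
  l.Nodup ∧ l.toFinset = S ∧ NonCrossing (pathEdges l)

/-- `l` is a plane straight-line spanning cycle of `S`. -/
def IsPlaneCycle (S : Finset Pt) (l : List Pt) : Prop :=
  3 ≤ l.length ∧ l.Nodup ∧ l.toFinset = S ∧ NonCrossing (cycleEdges l)

/-- The set of edges of a path, as unordered pairs. -/
def edgeSet (l : List Pt) : Finset (Sym2 Pt) :=
  ((pathEdges l).map fun e => s(e.1, e.2)).toFinset

/-- The set of edges of a cycle, as unordered pairs. -/
def cycleEdgeSet (l : List Pt) : Finset (Sym2 Pt) :=
  ((cycleEdges l).map fun e => s(e.1, e.2)).toFinset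

/-- No segment joining two points of `S` crosses any edge of the cycle `l`. -/
def UncrossedCycle (S : Finset Pt) (l : List Pt) : Prop :=
  ∀ a ∈ S, ∀ b ∈ S, a ≠ b → ∀ e ∈ cycleEdges l, s(a, b) ≠ s(e.1, e.2) →
    openSegment ℝ a b ∩ openSegment ℝ e.1 e.2 = ∅

/-- Two plane spanning paths of `S` differ by a single flip. -/
def FlipAdj (S : Finset Pt) (P Q : List Pt) : Prop :=
  IsPlanePath S P ∧ IsPlanePath S Q ∧
    ∃ e f, e ≠ f ∧ e ∈ edgeSet P ∧ f ∈ edgeSet Q ∧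
      (edgeSet P).erase e = (edgeSet Q).erase f

/-- There is a sequence of `k` flips from `P` to (a representative of) `Q`, all of whose
members are plane spanning paths of `S` satisfying the additional property `A`. -/
def FlipSeq (S : Finset Pt) (A : List Pt → Prop) (k : ℕ) (P Q : List Pt) : Prop :=
  ∃ f : ℕ → List Pt, f 0 = P ∧ edgeSet (f k) = edgeSet Q ∧
    (∀ i ≤ k, IsPlanePath S (f i) ∧ A (f i)) ∧
    ∀ i < k, FlipAdj S (f i) (f (i + 1))

/-- The flip graph on the plane spanning paths of `S` satisfying `A` is connected. -/
def FlipConnected (S : Finset Pt) (A : List Pt → Prop) : Prop :=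
  ∀ P Q : List Pt, IsPlanePath S P → A P → IsPlanePath S Q → A Q →
    ∃ k, FlipSeq S A k P Q

/-- `uv` is an edge of the boundary of the convex hull of `S`. -/
def HullEdge (S : Finset Pt) (u v : Pt) : Prop :=
  u ∈ S ∧ v ∈ S ∧ u ≠ v ∧ segment ℝ u v ⊆ frontier (convexHull ℝ (S : Set Pt))

/-- `p` is an extreme point (a vertex of the convex hull) of `S`. -/
def ExtremePt (S : Finset Pt) (p : Pt) : Prop :=
  p ∈ S ∧ p ∉ convexHull ℝ ((S.erase p : Finset Pt) : Set Pt)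

/-- `p` is a point of `S` lying strictly in the interior of the convex hull of `S`. -/
def InteriorPt (S : Finset Pt) (p : Pt) : Prop :=
  p ∈ S ∧ p ∈ interior (convexHull ℝ (S : Set Pt))

/-- Twice the signed area of the triangle `a b c` (orientation test). -/
def sign3 (a b c : Pt) : ℝ :=
  (b.1 - a.1) * (c.2 - a.2) - (b.2 - a.2) * (c.1 - a.1)



section Aux

lemma sign3_affine (u v a b : Pt) (α β : ℝ) (h : α + β = 1) :
    sign3 u v (α • a + β • b) = α * sign3 u v a + β * sign3 u v b := by
  obtain rfl : β = 1 - α := by linarith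
  simp only [sign3, Prod.fst_add, Prod.snd_add, Prod.smul_fst, Prod.smul_snd, smul_eq_mul]
  ring

lemma sign3_self (u v : Pt) : sign3 u v u = 0 := by simp [sign3]

lemma sign3_self' (u v : Pt) : sign3 u v v = 0 := by simp [sign3]; ring

lemma sign3_swap (u v p : Pt) : sign3 v u p = - sign3 u v p := by simp [sign3]; ring

lemma lineparam (u v x : Pt) (huv : u ≠ v) (h : sign3 u v x = 0) :
    ∃ s : ℝ, x = (1 - s) • u + s • v := by
  by_cases h1 : v.1 ≠ u.1
  · refine ⟨(x.1 - u.1) / (v.1 - u.1), ?_⟩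
    have h1' : v.1 - u.1 ≠ 0 := sub_ne_zero.2 h1
    have key : (v.1 - u.1) * (x.2 - u.2) = (v.2 - u.2) * (x.1 - u.1) := by
      simp [sign3] at h; linarith
    apply Prod.ext <;> simp [Prod.smul_fst, Prod.smul_snd, smul_eq_mul] <;>
      field_simp <;> ring_nf <;> nlinarith [key]
  · push_neg at h1
    have h2 : v.2 ≠ u.2 := by
      intro h2; exact huv (Prod.ext h1.symm h2.symm)
    refine ⟨(x.2 - u.2) / (v.2 - u.2), ?_⟩
    have h2' : v.2 - u.2 ≠ 0 := sub_ne_zero.2 h2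
    have key : (v.1 - u.1) * (x.2 - u.2) = (v.2 - u.2) * (x.1 - u.1) := by
      simp [sign3] at h; linarith
    apply Prod.ext <;> simp [Prod.smul_fst, Prod.smul_snd, smul_eq_mul] <;>
      field_simp <;> ring_nf <;> nlinarith [key]

lemma collinear_of_sign3 (u v r : Pt) (huv : u ≠ v) (h : sign3 u v r = 0) :
    Collinear ℝ ({u, v, r} : Set Pt) := by
  obtain ⟨s, hs⟩ := lineparam u v r huv h
  rw [collinear_iff_exists_forall_eq_smul_vadd]
  refine ⟨u, v - u, ?_⟩
  intro p hp
  rcases hp with rfl | rfl | rfl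
  · exact ⟨0, by simp⟩
  · exact ⟨1, by simp⟩
  · refine ⟨s, ?_⟩
    rw [hs]
    show (1 - s) • u + s • v = s • (v - u) + u
    module

lemma extreme_open {S : Finset Pt} {u : Pt} (hu : ExtremePt S u) {a b : Pt}
    (ha : a ∈ convexHull ℝ (S : Set Pt)) (hb : b ∈ convexHull ℝ (S : Set Pt))
    (hm : u ∈ openSegment ℝ a b) : a = u ∧ b = u := by
  obtain ⟨huS, hue⟩ := hu
  by_cases hne : ((S.erase u : Finset Pt) : Set Pt).Nonempty
  · have hins : (S : Set Pt) = insert u ((S.erase u : Finset Pt) : Set Pt) := by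
      ext x
      constructor
      · intro hx
        rcases eq_or_ne x u with rfl | h
        · exact Set.mem_insert _ _
        · exact Set.mem_insert_of_mem _ (by simp_all)
      · intro hx
        rcases hx with rfl | hx
        · exact_mod_cast huS
        · simp only [Finset.coe_erase, Set.mem_diff] at hx
          exact hx.1
    rw [hins, convexHull_insert hne, mem_convexJoin] at ha hb
    obtain ⟨u₁, hu₁, a', ha', haa⟩ := ha
    obtain ⟨u₂, hu₂, b', hb', hbb⟩ := hb
    rw [Set.mem_singleton_iff] at hu₁ hu₂
    rw [hu₁] at haa; rw [hu₂] at hbb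
    obtain ⟨s1, s, hs1, hs, hss, hsa⟩ := haa
    obtain ⟨t1, t, ht1, ht, htt, htb⟩ := hbb
    obtain ⟨l1, l, hl1, hl, hll, hlu⟩ := hm
    set μ := l1 * s + l * t with hμ
    have hμ0 : 0 ≤ μ := by positivity
    rcases eq_or_lt_of_le hμ0 with hμe | hμp
    · have h1 : l1 * s = 0 := by nlinarith [mul_nonneg hl.le ht, mul_nonneg hl1.le hs]
      have h2 : l * t = 0 := by nlinarith [mul_nonneg hl.le ht, mul_nonneg hl1.le hs]
      have hs0 : s = 0 := by
        rcases mul_eq_zero.1 h1 with h | h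
        · exact absurd h (ne_of_gt hl1)
        · exact h
      have ht0 : t = 0 := by
        rcases mul_eq_zero.1 h2 with h | h
        · exact absurd h (ne_of_gt hl)
        · exact h
      constructor
      · rw [← hsa, hs0]; have hss1 : s1 = 1 := by linarith
        simp [hss1]
      · rw [← htb, ht0]; have htt1 : t1 = 1 := by linarith
        simp [htt1]
    · exfalso
      apply hue
      have hseg : u ∈ segment ℝ a' b' := by
        refine ⟨l1 * s / μ, l * t / μ, by positivity, by positivity, ?_, ?_⟩
        · field_simp; exact hμ.symm
        · rw [← hsa, ← htb] at hlu
          have h1 : s1 = 1 - s := by linarith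
          have h2 : t1 = 1 - t := by linarith
          subst h1; subst h2
          have hμne : μ ≠ 0 := ne_of_gt hμp
          have e1 := congrArg Prod.fst hlu
          have e2 := congrArg Prod.snd hlu
          simp only [Prod.fst_add, Prod.snd_add, Prod.smul_fst, Prod.smul_snd,
            smul_eq_mul] at e1 e2
          apply Prod.ext <;>
            simp only [Prod.fst_add, Prod.snd_add, Prod.smul_fst, Prod.smul_snd,
              smul_eq_mul] <;> field_simp
          · linear_combination e1 - u.1 * hll
          · linear_combination e2 - u.2 * hll
      exact (convex_convexHull ℝ _).segment_subset ha' hb' hseg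
  · have hS : (S : Set Pt) = {u} := by
      ext x; simp only [Set.mem_singleton_iff]
      constructor
      · intro hx; by_contra hne'
        exact hne ⟨x, by simp [Finset.mem_erase, hne']; exact_mod_cast hx⟩
      · rintro rfl; exact_mod_cast huS
    rw [hS, convexHull_singleton] at ha hb
    simp only [Set.mem_singleton_iff] at ha hb
    exact ⟨ha, hb⟩

lemma exists_neg_side (S : Finset Pt) (u v : Pt) (hu : u ∈ S) (hv : v ∈ S)
    (huv : u ≠ v) (hnc : ¬ HullEdge S u v) : ∃ p ∈ S, sign3 u v p < 0 := by
  by_contra hcon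
  push_neg at hcon
  apply hnc
  refine ⟨hu, hv, huv, ?_⟩
  have hconv : Convex ℝ {x : Pt | 0 ≤ sign3 u v x} := by
    intro a ha b hb α β hα hβ hαβ
    simp only [Set.mem_setOf_eq] at *
    rw [sign3_affine u v a b α β hαβ]
    positivity
  have hsub : convexHull ℝ (S : Set Pt) ⊆ {x : Pt | 0 ≤ sign3 u v x} :=
    convexHull_min (fun p hp => hcon p (by exact_mod_cast hp)) hconv
  have hclosed : IsClosed (convexHull ℝ (S : Set Pt)) :=
    S.finite_toSet.isClosed_convexHull (𝕜 := ℝ)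
  intro x hx
  rw [hclosed.frontier_eq]
  constructor
  · exact (convex_convexHull ℝ _).segment_subset
      (subset_convexHull ℝ _ (by exact_mod_cast hu))
      (subset_convexHull ℝ _ (by exact_mod_cast hv)) hx
  · intro hint
    obtain ⟨α, β, hα, hβ, hαβ, rfl⟩ := hx
    have hfx : sign3 u v (α • u + β • v) = 0 := by
      rw [sign3_affine u v u v α β hαβ, sign3_self, sign3_self']; ring
    set x := α • u + β • v
    set w : Pt := (v.2 - u.2, u.1 - v.1) with hw
    have hwne : ‖w‖ ≠ 0 := by
      simp only [norm_ne_zero_iff]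
      intro h0
      simp only [hw, Prod.mk_eq_zero] at h0
      exact huv (Prod.ext (by linarith [h0.2]) (by linarith [h0.1]))
    have hwpos : 0 < ‖w‖ := lt_of_le_of_ne (norm_nonneg w) (Ne.symm hwne)
    obtain ⟨ε, hε, hball⟩ := Metric.isOpen_iff.1 isOpen_interior x hint
    set δ := ε / (2 * ‖w‖) with hδ
    have hδpos : 0 < δ := by positivity
    have hy : x + δ • w ∈ interior (convexHull ℝ (S : Set Pt)) := by
      apply hball
      rw [Metric.mem_ball, dist_eq_norm, add_sub_cancel_left, norm_smul]
      rw [Real.norm_eq_abs, abs_of_pos hδpos, hδ]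
      rw [div_mul_eq_mul_div]
      rw [div_lt_iff₀ (by positivity)]
      nlinarith [hwpos, hε]
    have hy2 : 0 ≤ sign3 u v (x + δ • w) := hsub (interior_subset hy)
    have hcalc : sign3 u v (x + δ • w) =
        sign3 u v x - δ * ((v.1 - u.1)^2 + (v.2 - u.2)^2) := by
      simp [sign3, hw, Prod.smul_fst, Prod.smul_snd, smul_eq_mul]
      ring
    rw [hcalc, hfx] at hy2
    have hvu : (v.1 - u.1)^2 + (v.2 - u.2)^2 > 0 := by
      have hor : v.1 ≠ u.1 ∨ v.2 ≠ u.2 := by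
        by_contra hc; push_neg at hc; exact huv (Prod.ext hc.1.symm hc.2.symm)
      rcases hor with h | h
      · have := sub_ne_zero.2 h; positivity
      · have := sub_ne_zero.2 h; positivity
    nlinarith

lemma cross_exists {S : Finset Pt} {u v : Pt} (hu : ExtremePt S u) (hv : ExtremePt S v)
    (huv : u ≠ v) {a b : Pt} (haS : a ∈ S) (hbS : b ∈ S)
    (hfa : sign3 u v a < 0) (hfb : 0 < sign3 u v b) :
    (openSegment ℝ a b ∩ openSegment ℝ u v).Nonempty := by
  have haC : a ∈ convexHull ℝ (S : Set Pt) := subset_convexHull ℝ _ (by exact_mod_cast haS)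
  have hbC : b ∈ convexHull ℝ (S : Set Pt) := subset_convexHull ℝ _ (by exact_mod_cast hbS)
  have huC : u ∈ convexHull ℝ (S : Set Pt) := subset_convexHull ℝ _ (by exact_mod_cast hu.1)
  have hvC : v ∈ convexHull ℝ (S : Set Pt) := subset_convexHull ℝ _ (by exact_mod_cast hv.1)
  set fa := sign3 u v a with hfa'
  set fb := sign3 u v b with hfb'
  have hden : fa - fb < 0 := by linarith
  set t := fa / (fa - fb) with ht'
  have ht0 : 0 < t := by
    rw [ht', div_pos_iff]; right; exact ⟨hfa, hden⟩
  have ht1 : t < 1 := by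
    rw [ht', div_lt_one_of_neg hden]; linarith
  set x := (1 - t) • a + t • b with hx'
  have hxab : x ∈ openSegment ℝ a b := ⟨1 - t, t, by linarith, ht0, by ring, rfl⟩
  have hxC : x ∈ convexHull ℝ (S : Set Pt) :=
    (convex_convexHull ℝ _).openSegment_subset haC hbC hxab
  have hdne : fa - fb ≠ 0 := ne_of_lt hden
  have hfx : sign3 u v x = 0 := by
    rw [hx', sign3_affine u v a b (1 - t) t (by ring), ← hfa', ← hfb', ht']
    field_simp
    ring
  obtain ⟨s, hxs⟩ := lineparam u v x huv hfx
  have hxu : x ≠ u := by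
    intro h
    have h1 := (extreme_open hu haC hbC (h ▸ hxab)).1
    rw [h1, sign3_self] at hfa'
    linarith [hfa, hfa'.le, hfa'.ge]
  have hxv : x ≠ v := by
    intro h
    have h1 := (extreme_open hv haC hbC (h ▸ hxab)).1
    rw [h1, sign3_self'] at hfa'
    linarith [hfa, hfa'.le, hfa'.ge]
  rcases lt_trichotomy s 0 with hs | hs | hs
  · exfalso
    have h1s : (0:ℝ) < 1 - s := by linarith
    have hmem : u ∈ openSegment ℝ x v := by
      refine ⟨1 / (1 - s), -s / (1 - s), by positivity, div_pos (by linarith) h1s, ?_, ?_⟩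
      · rw [← add_div, div_eq_one_iff_eq (by linarith : (1:ℝ) - s ≠ 0)]; ring
      · rw [hxs]; match_scalars <;> field_simp <;> ring
    have := extreme_open hu hxC hvC hmem
    exact huv (this.2.symm)
  · exfalso
    apply hxu
    rw [hxs, hs]; simp
  · rcases lt_trichotomy s 1 with hs1 | hs1 | hs1
    · exact ⟨x, hxab, ⟨1 - s, s, by linarith, hs, by ring, hxs.symm⟩⟩
    · exfalso; apply hxv; rw [hxs, hs1]; simp
    · exfalso
      have hs0 : (0:ℝ) < s := by linarith
      have hmem : v ∈ openSegment ℝ u x := by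
        refine ⟨(s - 1) / s, 1 / s, div_pos (by linarith) hs0, by positivity, ?_, ?_⟩
        · rw [← add_div, div_eq_one_iff_eq (by linarith : s ≠ 0)]; ring
        · rw [hxs]; match_scalars <;> field_simp <;> ring
      have := extreme_open hv huC hxC hmem
      exact huv this.1

lemma zip_lift {y x : Pt} {ys : List Pt} {e : Pt × Pt}
    (he : e ∈ (y :: ys).zip (y :: ys).tail) :
    e ∈ (x :: y :: ys).zip (x :: y :: ys).tail := by
  simp only [List.tail_cons, List.zip_cons_cons] at he ⊢
  exact List.mem_cons_of_mem _ he

lemma chain_sign (g : Pt → ℝ) : ∀ (l : List Pt), ∀ a ∈ l, ∀ b ∈ l, g a < 0 → 0 < g b →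
    ∃ e ∈ l.zip l.tail, g e.1 * g e.2 ≤ 0 := by
  intro l
  induction l with
  | nil => simp
  | cons x xs ih =>
    intro a ha b hb hga hgb
    cases xs with
    | nil =>
      simp only [List.mem_singleton] at ha hb
      subst ha; subst hb; linarith
    | cons y ys =>
      by_cases hxy : g x * g y ≤ 0
      · exact ⟨(x, y), by simp [List.zip_cons_cons], hxy⟩
      · push_neg at hxy
        rcases List.mem_cons.1 ha with rfl | ha'
        · have hgy : g y < 0 := by
            rcases mul_pos_iff.1 hxy with ⟨h1, _⟩ | ⟨_, h2⟩
            · linarith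
            · exact h2
          have hb' : b ∈ y :: ys := by
            rcases List.mem_cons.1 hb with rfl | h
            · linarith
            · exact h
          obtain ⟨e, he, hp⟩ := ih y List.mem_cons_self b hb' hgy hgb
          exact ⟨e, zip_lift he, hp⟩
        · rcases List.mem_cons.1 hb with rfl | hb'
          · have hgy : 0 < g y := by
              rcases mul_pos_iff.1 hxy with ⟨_, h⟩ | ⟨h, _⟩
              · exact h
              · linarith
            obtain ⟨e, he, hp⟩ := ih a ha' y List.mem_cons_self hga hgy
            exact ⟨e, zip_lift he, hp⟩
          · obtain ⟨e, he, hp⟩ := ih a ha' b hb' hga hgb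
            exact ⟨e, zip_lift he, hp⟩

end Aux

/-- If `u` and `v` are extreme points of `S` that are not consecutive along the
convex hull boundary, then no plane spanning path of `S` starts with the edge `uv`. -/
theorem stmt_3 (S : Finset Pt) (hgp : GenPos S)
    (u v : Pt) (hu : ExtremePt S u) (hv : ExtremePt S v) (huv : u ≠ v)
    (hnc : ¬ HullEdge S u v) :
    ¬ ∃ rest, IsPlanePath S (u :: v :: rest) := by
  rintro ⟨rest, hnd, htf, hcr⟩
  have hlist : ∀ p : Pt, p ∈ S ↔ p ∈ (u :: v :: rest) := by
    intro p; rw [← htf]; simp [List.mem_toFinset]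
  have hrestS : ∀ r ∈ rest, r ∈ S := fun r hr => (hlist r).2 (by simp [hr])
  have hndu : u ∉ v :: rest := (List.nodup_cons.1 hnd).1
  have hndv : v ∉ rest := (List.nodup_cons.1 (List.nodup_cons.1 hnd).2).1
  have hfr : ∀ r ∈ rest, sign3 u v r ≠ 0 := by
    intro r hr h0
    have hru : r ≠ u := by rintro rfl; exact hndu (List.mem_cons_of_mem _ hr)
    have hrv : r ≠ v := by rintro rfl; exact hndv hr
    exact hgp u hu.1 v hv.1 r (hrestS r hr) huv (Ne.symm hru) (Ne.symm hrv)
      (collinear_of_sign3 u v r huv h0)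
  obtain ⟨p, hpS, hp⟩ := exists_neg_side S u v hu.1 hv.1 huv hnc
  have hnc' : ¬ HullEdge S v u := by
    intro h
    exact hnc ⟨h.2.1, h.1, (h.2.2.1).symm, by rw [segment_symm]; exact h.2.2.2⟩
  obtain ⟨q, hqS, hq⟩ := exists_neg_side S v u hv.1 hu.1 huv.symm hnc'
  rw [sign3_swap] at hq
  have hq' : 0 < sign3 u v q := by linarith
  have hprest : p ∈ rest := by
    rcases List.mem_cons.1 ((hlist p).1 hpS) with rfl | h
    · rw [sign3_self] at hp; exact absurd hp (lt_irrefl 0)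
    · rcases List.mem_cons.1 h with rfl | h2
      · rw [sign3_self'] at hp; exact absurd hp (lt_irrefl 0)
      · exact h2
  have hqrest : q ∈ rest := by
    rcases List.mem_cons.1 ((hlist q).1 hqS) with rfl | h
    · rw [sign3_self] at hq'; exact absurd hq' (lt_irrefl 0)
    · rcases List.mem_cons.1 h with rfl | h2
      · rw [sign3_self'] at hq'; exact absurd hq' (lt_irrefl 0)
      · exact h2
  obtain ⟨e, he, hprod⟩ := chain_sign (sign3 u v) rest p hprest q hqrest hp hq'
  obtain ⟨a, b⟩ := e
  have haR : a ∈ rest := (List.of_mem_zip he).1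
  have hbR : b ∈ rest := List.mem_of_mem_tail (List.of_mem_zip he).2
  have hprodlt : sign3 u v a * sign3 u v b < 0 := by
    rcases lt_or_eq_of_le hprod with h | h
    · exact h
    · exfalso
      rcases mul_eq_zero.1 h with h0 | h0
      · exact hfr a haR h0
      · exact hfr b hbR h0
  -- extract the disjointness of edge (u,v) with edge (a,b)
  have hcr' : ((u, v) :: (v :: rest).zip rest).Pairwise
      (fun e f => openSegment ℝ e.1 e.2 ∩ openSegment ℝ f.1 f.2 = ∅) := hcr
  have hhead := (List.pairwise_cons.1 hcr').1
  have hmem : (a, b) ∈ (v :: rest).zip rest := by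
    cases rest with
    | nil => simp at haR
    | cons r rs =>
      simp only [List.tail_cons] at he
      simp only [List.zip_cons_cons]
      exact List.mem_cons_of_mem _ he
  have hdisj := hhead (a, b) hmem
  simp only at hdisj
  rcases mul_neg_iff.1 hprodlt with ⟨hpos, hneg⟩ | ⟨hneg, hpos⟩
  · obtain ⟨x, hx1, hx2⟩ := cross_exists hu hv huv (hrestS b hbR) (hrestS a haR) hneg hpos
    rw [openSegment_symm] at hx1
    rw [Set.eq_empty_iff_forall_notMem] at hdisj
    exact hdisj x ⟨hx2, hx1⟩
  · obtain ⟨x, hx1, hx2⟩ := cross_exists hu hv huv (hrestS a haR) (hrestS b hbR) hneg hpos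
    rw [Set.eq_empty_iff_forall_notMem] at hdisj
    exact hdisj x ⟨hx2, hx1⟩
end
end

section
/- Let P = v1, v2, ..., vn be a plane straight-line spanning path on a point set S in general position, and suppose Q = (P \ {v_{i-1}v_i}) ∪ {v1vn} is again a plane spanning path, where the segments v1vn and v_{i-1}v_i do not cross (a Type 2 flip). Then Q can also be obtained from P by a sequence of i−1 Type 1 flips, where a Type 1 flip removes an edge v_{j-1}v_j and adds either v1v_j or v_{j-1}v_n (keeping the result a plane spanning path). -/
open scoped Classical

noncomputable section

/-- `Q` is obtained from the plane spanning path `P = v₁,…,vₙ` by a Type 1 flip: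
some edge `v_j v_{j+1}` is removed and replaced by `v₁ v_{j+1}` or by `v_j vₙ`. -/
def Type1Adj (S : Finset Pt) (P Q : List Pt) : Prop :=
  IsPlanePath S P ∧ IsPlanePath S Q ∧
  ∃ j : ℕ, j + 1 < P.length ∧
    ((1 ≤ j ∧ edgeSet Q =
        insert s(P.getD 0 pd, P.getD (j + 1) pd)
          ((edgeSet P).erase s(P.getD j pd, P.getD (j + 1) pd))) ∨
     (j + 2 < P.length ∧ edgeSet Q =
        insert s(P.getD j pd, P.getD (P.length - 1) pd)
          ((edgeSet P).erase s(P.getD j pd, P.getD (j + 1) pd))))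

lemma openSegment_nonempty (a b : Pt) : (openSegment ℝ a b).Nonempty :=
  ⟨_, ⟨1/2, 1/2, by norm_num, by norm_num, by norm_num, rfl⟩⟩

lemma mem_edgeSet' {l : List Pt} {x : Sym2 Pt} :
    x ∈ edgeSet l ↔ ∃ e ∈ pathEdges l, s(e.1, e.2) = x := by
  simp [edgeSet, List.mem_toFinset, List.mem_map]

lemma pathEdges_length (l : List Pt) : (pathEdges l).length = l.length - 1 := by
  simp [pathEdges, List.length_zip]

lemma mem_edgeSet {l : List Pt} {x : Sym2 Pt} :
    x ∈ edgeSet l ↔ ∃ k, k + 1 < l.length ∧ x = s(l.getD k pd, l.getD (k+1) pd) := by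
  rw [mem_edgeSet']
  constructor
  · rintro ⟨e, he, rfl⟩
    rw [List.mem_iff_getElem] at he
    obtain ⟨k, hk, rfl⟩ := he
    have hk1 : k + 1 < l.length := by
      rw [pathEdges_length] at hk; omega
    refine ⟨k, hk1, ?_⟩
    rw [List.getD_eq_getElem l pd (by omega), List.getD_eq_getElem l pd hk1]
    simp [pathEdges, List.getElem_zip, List.getElem_tail]
  · rintro ⟨k, hk, rfl⟩
    have hk' : k < (pathEdges l).length := by rw [pathEdges_length]; omega
    refine ⟨(pathEdges l)[k], List.getElem_mem _, ?_⟩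
    rw [List.getD_eq_getElem l pd (by omega), List.getD_eq_getElem l pd hk]
    simp [pathEdges, List.getElem_zip, List.getElem_tail]

lemma pathEdges_cons_cons (a b : Pt) (t : List Pt) :
    pathEdges (a :: b :: t) = (a, b) :: pathEdges (b :: t) := rfl

lemma pathEdges_concat : ∀ (u : List Pt) (a x : Pt),
    pathEdges ((a :: u) ++ [x]) = pathEdges (a :: u) ++ [((a :: u).getLast (by simp), x)] := by
  intro u
  induction u with
  | nil => intro a x; rfl
  | cons b u ih =>
    intro a x
    show pathEdges (a :: b :: (u ++ [x])) = _
    rw [pathEdges_cons_cons a b (u ++ [x]),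
      show (b :: (u ++ [x])) = (b :: u) ++ [x] from rfl, ih b x]
    rfl

lemma edgeSet_rotate_one {l : List Pt} (hnd : l.Nodup) (hl : 2 ≤ l.length) :
    edgeSet (l.rotate 1) =
      insert s(l.getD 0 pd, l.getD (l.length - 1) pd)
        ((edgeSet l).erase s(l.getD 0 pd, l.getD 1 pd)) := by
  match l, hl with
  | a :: b :: u, _ =>
    have hrot : (a :: b :: u).rotate 1 = (b :: u) ++ [a] := by
      simpa using List.rotate_cons_succ (b :: u) a 0
    have hlast : (a :: b :: u).getD ((a :: b :: u).length - 1) pd = (b :: u).getLast (by simp) := by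
      rw [List.getD_eq_getElem _ pd (by simp), List.getLast_eq_getElem]
      simp [List.getElem_cons_succ]
    have h0 : (a :: b :: u).getD 0 pd = a := rfl
    have h1 : (a :: b :: u).getD 1 pd = b := rfl
    rw [h0, h1, hlast]
    set c := (b :: u).getLast (by simp) with hc
    have hES : edgeSet ((a :: b :: u)) = insert s(a, b) (edgeSet (b :: u)) := by
      simp [edgeSet, pathEdges_cons_cons]
    have hab : s(a, b) ∉ edgeSet (b :: u) := by
      intro hmem
      rw [mem_edgeSet'] at hmem
      obtain ⟨e, he, hex⟩ := hmem
      have h2 := List.of_mem_zip he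
      have ha : a ∉ b :: u := by simpa using hnd.notMem
      rcases Sym2.eq_iff.mp hex with ⟨h3, _⟩ | ⟨_, h4⟩
      · exact ha (h3 ▸ h2.1)
      · exact ha (h4 ▸ List.mem_of_mem_tail h2.2)
    have hrotES : edgeSet ((a :: b :: u).rotate 1) = insert s(c, a) (edgeSet (b :: u)) := by
      rw [hrot]
      have := pathEdges_concat u b a
      rw [edgeSet, this]
      simp [edgeSet, ← hc]
    rw [hrotES, hES, Finset.erase_insert hab, Sym2.eq_swap]



lemma pathEdges_getElem (l : List Pt) (j : ℕ) (hj : j < (pathEdges l).length) :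
    (pathEdges l)[j] = (l.getD j pd, l.getD (j+1) pd) := by
  have hj1 : j + 1 < l.length := by rw [pathEdges_length] at hj; omega
  rw [List.getD_eq_getElem l pd (by omega), List.getD_eq_getElem l pd hj1]
  simp [pathEdges, List.getElem_zip, List.getElem_tail]

/-- A Type 2 flip (removing the edge `v_{i-1} v_i` and adding the uncrossing edge
`v₁ vₙ`) can be simulated by a sequence of `i - 1` Type 1 flips. -/
theorem stmt_7 (S : Finset Pt) (hgp : GenPos S) (P Q : List Pt)
    (hP : IsPlanePath S P) (hQ : IsPlanePath S Q)
    (i : ℕ) (hi2 : 2 ≤ i) (hin : i ≤ P.length)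
    (hflip : edgeSet Q =
      insert s(P.getD 0 pd, P.getD (P.length - 1) pd)
        ((edgeSet P).erase s(P.getD (i - 2) pd, P.getD (i - 1) pd)))
    (hnocross : openSegment ℝ (P.getD 0 pd) (P.getD (P.length - 1) pd) ∩
        openSegment ℝ (P.getD (i - 2) pd) (P.getD (i - 1) pd) = ∅) :
    ∃ f : ℕ → List Pt, f 0 = P ∧ edgeSet (f (i - 1)) = edgeSet Q ∧
      ∀ t < i - 1, Type1Adj S (f t) (f (t + 1)) := by
  classical
  obtain ⟨hndP, hSP, hncP⟩ := hP
  obtain ⟨hndQ, hSQ, hncQ⟩ := hQ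
  have hsymm : Symmetric (fun e f : Pt × Pt =>
      openSegment ℝ e.1 e.2 ∩ openSegment ℝ f.1 f.2 = ∅) := by
    intro e f h; rw [Set.inter_comm]; exact h
  set n := P.length with hn
  have hn2 : 2 ≤ n := hi2.trans hin
  by_cases hn3' : n < 3
  · exfalso
    have e1 : i - 2 = 0 := by omega
    have e2 : i - 1 = n - 1 := by omega
    rw [e1, e2, Set.inter_self] at hnocross
    exact (openSegment_nonempty _ _).ne_empty hnocross
  push_neg at hn3'
  have vinj : ∀ a, a < n → ∀ b, b < n → P.getD a pd = P.getD b pd → a = b := by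
    intro a ha b hb hab
    rw [List.getD_eq_getElem P pd (by omega), List.getD_eq_getElem P pd (by omega)] at hab
    exact (hndP.getElem_inj_iff).mp hab
  set w : ℕ → Pt := fun k => P.getD (k % n) pd with hw
  have hwlt : ∀ k, k < n → w k = P.getD k pd := by
    intro k hk; simp only [hw]; rw [Nat.mod_eq_of_lt hk]
  have hwn : w n = P.getD 0 pd := by simp [hw]
  have hwsucc : ∀ a, w (a % n + 1) = w (a + 1) := by
    intro a; simp only [hw]; rw [Nat.mod_add_mod]
  have ND : ∀ (l : List Pt), NonCrossing (pathEdges l) → ∀ a b c d : Pt,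
      s(a,b) ∈ edgeSet l → s(c,d) ∈ edgeSet l → s(a,b) ≠ s(c,d) →
      openSegment ℝ a b ∩ openSegment ℝ c d = ∅ := by
    intro l hnc a b c d hab hcd hne
    obtain ⟨e, he, hex⟩ := mem_edgeSet'.mp hab
    obtain ⟨f, hf, hfx⟩ := mem_edgeSet'.mp hcd
    have hef : e ≠ f := by rintro rfl; exact hne (hex.symm.trans hfx)
    haveI : Std.Symm (fun e f : Pt × Pt =>
        openSegment ℝ e.1 e.2 ∩ openSegment ℝ f.1 f.2 = ∅) := ⟨fun a b h => hsymm h⟩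
    have hd := List.Pairwise.forall (R := fun e f : Pt × Pt =>
        openSegment ℝ e.1 e.2 ∩ openSegment ℝ f.1 f.2 = ∅) hnc he hf hef
    have h1 : openSegment ℝ e.1 e.2 = openSegment ℝ a b := by
      rcases Sym2.eq_iff.mp hex with ⟨h,h'⟩|⟨h,h'⟩ <;> rw [h, h']
      exact openSegment_symm ℝ b a
    have h2 : openSegment ℝ f.1 f.2 = openSegment ℝ c d := by
      rcases Sym2.eq_iff.mp hfx with ⟨h,h'⟩|⟨h,h'⟩ <;> rw [h, h']
      exact openSegment_symm ℝ d c
    rw [h1, h2] at hd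
    exact hd
  have memP : ∀ m, m + 1 < n → s(P.getD m pd, P.getD (m+1) pd) ∈ edgeSet P :=
    fun m hm => mem_edgeSet.mpr ⟨m, by omega, rfl⟩
  have hNmem : s(P.getD 0 pd, P.getD (n-1) pd) ∈ edgeSet Q := by
    rw [hflip]; exact Finset.mem_insert_self _ _
  have ne_new : ∀ m, m + 1 < n →
      s(P.getD m pd, P.getD (m+1) pd) ≠ s(P.getD 0 pd, P.getD (n-1) pd) := by
    intro m hm h
    rcases Sym2.eq_iff.mp h with ⟨h1,h2⟩|⟨h1,h2⟩
    · have e1 := vinj m (by omega) 0 (by omega) h1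
      have e2 := vinj (m+1) (by omega) (n-1) (by omega) h2
      omega
    · have e1 := vinj m (by omega) (n-1) (by omega) h1
      omega
  have memQ_old : ∀ m, m + 1 < n → m ≠ i - 2 →
      s(P.getD m pd, P.getD (m+1) pd) ∈ edgeSet Q := by
    intro m hm hmi
    rw [hflip]
    apply Finset.mem_insert_of_mem
    rw [Finset.mem_erase]
    refine ⟨?_, memP m hm⟩
    intro h
    rcases Sym2.eq_iff.mp h with ⟨h1,h2⟩|⟨h1,h2⟩
    · exact hmi (vinj m (by omega) (i-2) (by omega) h1)
    · have e1 := vinj m (by omega) (i-1) (by omega) h1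
      have e2 := vinj (m+1) (by omega) (i-2) (by omega) h2
      omega
  have master0 : ∀ m, m + 1 < n →
      openSegment ℝ (P.getD 0 pd) (P.getD (n-1) pd) ∩
        openSegment ℝ (P.getD m pd) (P.getD (m+1) pd) = ∅ := by
    intro m hm
    by_cases hmi : m = i - 2
    · subst hmi
      have h1 : i - 2 + 1 = i - 1 := by omega
      rw [h1]
      exact hnocross
    · exact ND Q hncQ _ _ _ _ hNmem (memQ_old m hm hmi) (ne_new m hm).symm
  have master : ∀ m, m < n → ∀ m', m' < n → m ≠ m' →
      openSegment ℝ (w m) (w (m+1)) ∩ openSegment ℝ (w m') (w (m'+1)) = ∅ := by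
    have key : ∀ m, m + 1 < n → openSegment ℝ (w m) (w (m+1)) =
        openSegment ℝ (P.getD m pd) (P.getD (m+1) pd) := by
      intro m hm; rw [hwlt m (by omega), hwlt (m+1) (by omega)]
    have keyn : openSegment ℝ (w (n-1)) (w (n-1+1)) =
        openSegment ℝ (P.getD 0 pd) (P.getD (n-1) pd) := by
      have h : n - 1 + 1 = n := by omega
      rw [h, hwn, hwlt (n-1) (by omega), openSegment_symm]
    intro m hm m' hm' hne
    rcases Nat.lt_or_ge (m+1) n with h1 | h1
    · rcases Nat.lt_or_ge (m'+1) n with h2 | h2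
      · rw [key m h1, key m' h2]
        refine ND P hncP _ _ _ _ (memP m h1) (memP m' h2) ?_
        intro h
        rcases Sym2.eq_iff.mp h with ⟨ha,hb⟩|⟨ha,hb⟩
        · exact hne (vinj m (by omega) m' (by omega) ha)
        · have e1 := vinj m (by omega) (m'+1) (by omega) ha
          have e2 := vinj (m+1) (by omega) m' (by omega) hb
          omega
      · have hm'' : m' = n - 1 := by omega
        subst hm''
        rw [Set.inter_comm, keyn, key m h1]
        exact master0 m h1
    · have hm'' : m = n - 1 := by omega
      subst hm''
      have h2 : m' + 1 < n := by omega
      rw [keyn, key m' h2]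
      exact master0 m' h2
  have rotlen : ∀ t, (P.rotate t).length = n := by
    intro t; rw [List.length_rotate]
  have rotget : ∀ t k, k < n → (P.rotate t).getD k pd = w (t + k) := by
    intro t k hk
    have h1 : k < (P.rotate t).length := by rw [rotlen]; omega
    have h2 : (k + t) % P.length < P.length := Nat.mod_lt _ (by omega)
    rw [List.getD_eq_getElem _ pd h1, List.getElem_rotate P t k h1,
        ← List.getD_eq_getElem P pd h2]
    simp only [hw]
    rw [← hn, Nat.add_comm k t]
  have plane : ∀ t, IsPlanePath S (P.rotate t) := by
    intro t
    refine ⟨List.nodup_rotate.mpr hndP, ?_, ?_⟩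
    · rw [← hSP]; ext x; simp [List.mem_toFinset, List.mem_rotate]
    · unfold NonCrossing
      rw [List.pairwise_iff_getElem]
      intro k k' hk hk' hkk'
      have hkn : k + 1 < n := by
        rw [pathEdges_length, rotlen] at hk'; omega
      have hk'n : k' + 1 < n := by
        rw [pathEdges_length, rotlen] at hk'; omega
      rw [pathEdges_getElem _ k hk, pathEdges_getElem _ k' hk']
      simp only
      rw [rotget t k (by omega), rotget t (k+1) (by omega),
          rotget t k' (by omega), rotget t (k'+1) (by omega)]
      have e1 : ∀ a : ℕ, w a = w (a % n) := by
        intro a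
        rw [hwlt (a % n) (Nat.mod_lt _ (by omega))]
      have hmm : t + k + 1 = (t + k) + 1 := rfl
      rw [show w (t + (k+1)) = w ((t+k) % n + 1) by rw [hwsucc (t+k), Nat.add_assoc],
          show w (t + (k'+1)) = w ((t+k') % n + 1) by rw [hwsucc (t+k'), Nat.add_assoc],
          e1 (t+k), e1 (t+k')]
      refine master _ (Nat.mod_lt _ (by omega)) _ (Nat.mod_lt _ (by omega)) ?_
      intro h
      have h' : k % n = k' % n := Nat.ModEq.add_left_cancel' t h
      rw [Nat.mod_eq_of_lt (by omega), Nat.mod_eq_of_lt (by omega)] at h'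
      omega
  have step : ∀ t, Type1Adj S (P.rotate t) (P.rotate (t+1)) := by
    intro t
    refine ⟨plane t, plane (t+1), 0, by rw [rotlen]; omega,
      Or.inr ⟨by rw [rotlen]; omega, ?_⟩⟩
    rw [← List.rotate_rotate]
    exact edgeSet_rotate_one (List.nodup_rotate.mpr hndP) (by rw [rotlen]; omega)
  have final : ∀ t, t ≤ i - 1 → 1 ≤ t →
      edgeSet (P.rotate t) =
        insert s(P.getD 0 pd, P.getD (n-1) pd)
          ((edgeSet P).erase s(P.getD (t-1) pd, P.getD t pd)) := by
    intro t
    induction t with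
    | zero => intro _ h; omega
    | succ t IH =>
      intro h2 _
      simp only [Nat.add_sub_cancel]
      rcases Nat.eq_zero_or_pos t with rfl | ht1
      · have base := edgeSet_rotate_one hndP (by omega)
        rw [← hn] at base
        simpa using base
      · have IH' := IH (by omega) ht1
        rw [← List.rotate_rotate,
          edgeSet_rotate_one (List.nodup_rotate.mpr hndP) (by rw [rotlen]; omega)]
        have g0 : (P.rotate t).getD 0 pd = P.getD t pd := by
          rw [rotget t 0 (by omega)]
          rw [show t + 0 = t from rfl, hwlt t (by omega)]
        have g1 : (P.rotate t).getD 1 pd = P.getD (t+1) pd := by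
          rw [rotget t 1 (by omega), hwlt (t+1) (by omega)]
        have glast : (P.rotate t).getD ((P.rotate t).length - 1) pd = P.getD (t-1) pd := by
          rw [rotlen, rotget t (n-1) (by omega)]
          have hh : t + (n - 1) = (t-1) + n := by omega
          simp only [hw]
          rw [hh, Nat.add_mod_right, Nat.mod_eq_of_lt (by omega)]
        rw [g0, g1, glast, IH']
        have hne1 : s(P.getD 0 pd, P.getD (n-1) pd) ≠ s(P.getD t pd, P.getD (t+1) pd) :=
          (ne_new t (by omega)).symm
        rw [Finset.erase_insert_of_ne hne1, Finset.insert_comm]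
        congr 1
        rw [Finset.erase_right_comm,
          show s(P.getD t pd, P.getD (t-1) pd) = s(P.getD (t-1) pd, P.getD t pd) from
            Sym2.eq_swap]
        apply Finset.insert_erase
        rw [Finset.mem_erase]
        constructor
        · intro h
          rcases Sym2.eq_iff.mp h with ⟨ha,hb⟩|⟨ha,hb⟩
          · have e1 := vinj (t-1) (by omega) t (by omega) ha
            omega
          · have e1 := vinj (t-1) (by omega) (t+1) (by omega) ha
            omega
        · have hm := memP (t-1) (by omega)
          rw [show t - 1 + 1 = t from by omega] at hm
          exact hm
  refine ⟨fun t => P.rotate t, List.rotate_zero P, ?_, fun t ht => step t⟩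
  rw [final (i-1) le_rfl (by omega),
    show i - 1 - 1 = i - 2 from by omega, hflip]
end
end
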